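/- Let f be a nonzero element of the free right-symmetric algebra A = RS⟨x_1,…,x_n⟩, let B = RS⟨x_1,…,x_n,y⟩ be the free right-symmetric algebra on one additional variable y (with y > x_n), let W_y be the set of good words in the alphabet {x_1,…,x_n,y} of degree exactly 1 in y, and let π : B → A be the algebra homomorphism with π(x_i) = x_i and π(y) = f. Then the k-linear span of π(W_y) is exactly the two-sided ideal (f) of A generated by f. -/

import Mathlib

/-!
The right-symmetric identity `(rs)t = r(st) + (rt)s - r(ts)` rewrites a word containing a bad
subword `(rs)t`, `t < s`, as a combination of three strictly smaller words with the same letters.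
The word order is well founded, so every word is a combination of good words of the same
`y`-degree, and `span π(W_y)` is the span of `π` of all words of `y`-degree one. That span
contains `f = π(y)`, lies in every ideal containing `f`, and is stable under multiplication by
words in `x_1, …, x_n`, which span `A`; hence it is `(f)`.
-/

namespace RS

/-- The degree of a nonassociative word. -/
def deg {X : Type*} : FreeMagma X → ℕ
  | .of _ => 1
  | .mul u v => deg u + deg v

/-- The order on nonassociative words: `u < v` if `d u < d v`; words of equal degree 1 are
compared in `X`; words `u = u₁u₂`, `v = v₁v₂` of equal degree `≥ 2` are compared
lexicographically. -/
def wlt {X : Type*} [LinearOrder X] : FreeMagma X → FreeMagma X → Prop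
  | .of a, .of b => a < b
  | .of _, .mul _ _ => True
  | .mul _ _, .of _ => False
  | .mul u₁ u₂, .mul v₁ v₂ =>
      deg (FreeMagma.mul u₁ u₂) < deg (FreeMagma.mul v₁ v₂) ∨
        (deg (FreeMagma.mul u₁ u₂) = deg (FreeMagma.mul v₁ v₂) ∧
          (wlt u₁ v₁ ∨ (u₁ = v₁ ∧ wlt u₂ v₂)))

/-- `u ≤ v` on nonassociative words. -/
def wle {X : Type*} [LinearOrder X] (u v : FreeMagma X) : Prop := wlt u v ∨ u = v

/-- A word is good if it contains no subword `(rs)t` with `s > t`. -/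
def IsGood {X : Type*} [LinearOrder X] : FreeMagma X → Prop
  | .of _ => True
  | .mul (.of _) v => IsGood v
  | .mul (.mul u₁ u₂) v =>
      IsGood (FreeMagma.mul u₁ u₂) ∧ IsGood v ∧ ¬ wlt v u₂

/-- Evaluation of a nonassociative word at values `x` in a magma `A`. -/
def evalWord {X A : Type*} [Mul A] (x : X → A) : FreeMagma X → A
  | .of a => x a
  | .mul u v => evalWord x u * evalWord x v

/-- Data exhibiting a nonunital nonassociative `k`-algebra `A` as the free right-symmetric
algebra `RS⟨x_1,…,x_n⟩`: `A` satisfies the right-symmetric identity and the images of the good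
words form a `k`-linear basis (Segal's theorem). -/
structure FreeRSData (k : Type*) [Field k] (n : ℕ) (A : Type*)
    [NonUnitalNonAssocRing A] [Module k A] where
  rightSymm : ∀ a b c : A, (a * b) * c - a * (b * c) = (a * c) * b - a * (c * b)
  x : Fin n → A
  basis : Module.Basis {w : FreeMagma (Fin n) // IsGood w} k A
  basis_eq : ∀ w : {w : FreeMagma (Fin n) // IsGood w}, basis w = evalWord x w.1

/-- `w` is the leading word of `f`: it is a good word occurring in the representation of `f`
in the basis of good words, and every other good word occurring there is smaller. -/
def IsLeadingWord {k : Type*} [Field k] {n : ℕ} {A : Type*} [NonUnitalNonAssocRing A]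
    [Module k A] (D : FreeRSData k n A) (f : A) (w : FreeMagma (Fin n)) : Prop :=
  ∃ hw : IsGood w,
    (⟨w, hw⟩ : {u : FreeMagma (Fin n) // IsGood u}) ∈ (D.basis.repr f).support ∧
      ∀ u ∈ (D.basis.repr f).support, u.1 ≠ w → wlt u.1 w

/-- The left-normed word `x R_{w_1} ⋯ R_{w_m} = (…((x w_1) w_2) … w_m)`. -/
def leftNormed {X : Type*} (a : FreeMagma X) (l : List (FreeMagma X)) : FreeMagma X :=
  l.foldl FreeMagma.mul a

/-- The degree of a word in the variable `a`. -/
def countVar {X : Type*} [DecidableEq X] (a : X) : FreeMagma X → ℕ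
  | .of b => if b = a then 1 else 0
  | .mul u v => countVar a u + countVar a v

/-- The two-sided ideal of the nonunital nonassociative `k`-algebra `A` generated by `f`. -/
def idealGen (k : Type*) [Field k] {A : Type*} [NonUnitalNonAssocRing A] [Module k A]
    (f : A) : Submodule k A :=
  sInf {I : Submodule k A | f ∈ I ∧ ∀ a : A, ∀ y ∈ I, a * y ∈ I ∧ y * a ∈ I}

/-- A pair of (nonzero) elements `f, g` is reducible if there is a good word `s` in a single
variable with `s(f̄) = ḡ` or `s(ḡ) = f̄`. -/
def Reducible {k : Type*} [Field k] {n : ℕ} {A : Type*} [NonUnitalNonAssocRing A]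
    [Module k A] (D : FreeRSData k n A) (f g : A) : Prop :=
  ∃ wf wg : FreeMagma (Fin n), IsLeadingWord D f wf ∧ IsLeadingWord D g wg ∧
    ∃ s : FreeMagma Unit, IsGood s ∧
      (evalWord (fun _ => wf) s = wg ∨ evalWord (fun _ => wg) s = wf)

/-- An elementary automorphism: it fixes all generators but one, which is sent to
`α x_i + f` with `α ≠ 0` and `f` in the subalgebra generated by the other generators. -/
def IsElementary {k : Type*} [Field k] {n : ℕ} {A : Type*} [NonUnitalNonAssocRing A]
    [Module k A] [SMulCommClass k A A] [IsScalarTower k A A]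
    (D : FreeRSData k n A) (e : A →ₙₐ[k] A) : Prop :=
  Function.Bijective e ∧ ∃ i : Fin n,
    (∀ j : Fin n, j ≠ i → e (D.x j) = D.x j) ∧
    ∃ (α : k) (f : A), α ≠ 0 ∧
      f ∈ NonUnitalAlgebra.adjoin k (D.x '' {j | j ≠ i}) ∧
      e (D.x i) = α • D.x i + f

open Submodule

section Order

variable {X : Type*}

@[simp] lemma deg_of (a : X) : deg (FreeMagma.of a) = 1 := rfl

@[simp] lemma deg_mul (u v : FreeMagma X) : deg (u * v) = deg u + deg v := rfl

lemma deg_pos (w : FreeMagma X) : 0 < deg w := by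
  induction w with
  | ih1 a => simp
  | ih2 u v ihu _ => simpa using Nat.add_pos_left ihu _

variable [LinearOrder X]

lemma wlt_of_deg_lt {u v : FreeMagma X} (h : deg u < deg v) : wlt u v := by
  cases u with
  | of a => cases v with
    | of b => simp at h
    | mul v₁ v₂ => trivial
  | mul u₁ u₂ => cases v with
    | of b => have := deg_pos u₁; simp at h; omega
    | mul v₁ v₂ => exact Or.inl h

lemma deg_le_of_wlt {u v : FreeMagma X} (h : wlt u v) : deg u ≤ deg v := by
  cases u with
  | of a => exact Nat.succ_le_of_lt (deg_pos v)
  | mul u₁ u₂ => cases v with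
    | of b => exact h.elim
    | mul v₁ v₂ => rcases h with h | ⟨h, -⟩ <;> omega

lemma wlt_mul_left {u' u : FreeMagma X} (h : wlt u' u) (v : FreeMagma X) :
    wlt (u' * v) (u * v) := by
  rcases (deg_le_of_wlt h).lt_or_eq with hd | hd
  · exact wlt_of_deg_lt (by simpa using hd)
  · exact Or.inr ⟨by simp [hd], Or.inl h⟩

lemma wlt_mul_right {v' v : FreeMagma X} (h : wlt v' v) (u : FreeMagma X) :
    wlt (u * v') (u * v) := by
  rcases (deg_le_of_wlt h).lt_or_eq with hd | hd
  · exact wlt_of_deg_lt (by simpa using hd)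
  · exact Or.inr ⟨by simp [hd], Or.inr ⟨rfl, h⟩⟩

lemma wlt_mul_of_wlt_left {a b c d : FreeMagma X} (hd : deg (a * b) = deg (c * d))
    (h : wlt a c) : wlt (a * b) (c * d) :=
  Or.inr ⟨hd, Or.inl h⟩

variable [WellFoundedLT X]

lemma acc_wlt_of (a : X) : Acc wlt (FreeMagma.of a) := by
  induction a using WellFoundedLT.induction with
  | _ a ih =>
    refine ⟨_, fun w hw => ?_⟩
    cases w with
    | of b => exact ih b hw
    | mul => exact hw.elim

theorem wellFounded_wlt : WellFounded (wlt : FreeMagma X → FreeMagma X → Prop) := by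
  refine ⟨fun w => ?_⟩
  induction hd : deg w using Nat.strong_induction_on generalizing w with
  | _ d ih =>
    cases w with
    | of a => exact acc_wlt_of a
    | mul v₁ v₂ =>
      have h₁ : Acc wlt v₁ := ih _ (by have := deg_pos v₂; simp at hd; omega) _ rfl
      have h₂ : Acc wlt v₂ := ih _ (by have := deg_pos v₁; simp at hd; omega) _ rfl
      induction h₁ generalizing v₂ with
      | intro v₁ _ ih₁ =>
        induction h₂ with
        | intro v₂ _ ih₂ =>
          refine ⟨_, fun z hz => ?_⟩
          cases z with
          | of b => exact acc_wlt_of b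
          | mul u₁ u₂ =>
            rcases hz with hlt | ⟨heq, hlt | ⟨rfl, hlt⟩⟩
            · exact ih _ (hd ▸ hlt) _ rfl
            · exact ih₁ u₁ hlt u₂ (hd ▸ heq)
                (ih _ (by have := deg_pos u₁; simp at heq hd; omega) _ rfl)
            · exact ih₂ u₂ hlt (hd ▸ heq)

end Order

section Words

variable {X A : Type*}

@[simp] lemma evalWord_mul [Mul A] (x : X → A) (u v : FreeMagma X) :
    evalWord x (u * v) = evalWord x u * evalWord x v := rfl

@[simp] lemma countVar_mul [DecidableEq X] (ℓ : X) (u v : FreeMagma X) :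
    countVar ℓ (u * v) = countVar ℓ u + countVar ℓ v := rfl

lemma map_evalWord {B F : Type*} [Mul A] [Mul B] [FunLike F A B] [MulHomClass F A B]
    (φ : F) (x : X → A) (w : FreeMagma X) : φ (evalWord x w) = evalWord (φ ∘ x) w := by
  induction w with
  | ih1 a => rfl
  | ih2 u v hu hv => simp [hu, hv]

lemma evalWord_map {Y : Type*} [Mul A] (x : X → A) (g : Y → X) (w : FreeMagma Y) :
    evalWord x (FreeMagma.map g w) = evalWord (x ∘ g) w := by
  induction w with
  | ih1 a => rfl
  | ih2 u v hu hv => simp [hu, hv]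

lemma countVar_map_eq_zero {Y : Type*} [DecidableEq X] {ℓ : X} {g : Y → X}
    (hℓ : ℓ ∉ Set.range g) (w : FreeMagma Y) : countVar ℓ (FreeMagma.map g w) = 0 := by
  induction w with
  | ih1 a => simpa [countVar] using fun h => hℓ ⟨a, h⟩
  | ih2 u v hu hv => simp [hu, hv]

def IsRightSymmetric (A : Type*) [NonUnitalNonAssocRing A] : Prop :=
  ∀ a b c : A, a * b * c - a * (b * c) = a * c * b - a * (c * b)

lemma IsRightSymmetric.evalWord_mul_mul [NonUnitalNonAssocRing A] (hA : IsRightSymmetric A)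
    (x : X → A) (u₁ u₂ v : FreeMagma X) :
    evalWord x (u₁ * u₂ * v) =
      evalWord x (u₁ * (u₂ * v)) + evalWord x (u₁ * v * u₂) - evalWord x (u₁ * (v * u₂)) := by
  simp only [evalWord_mul]
  rw [sub_eq_iff_eq_add.1 (hA _ _ _)]
  abel

end Words

section Reduction

variable {k A X : Type*} [CommRing k] [NonUnitalNonAssocRing A] [Module k A]
  [LinearOrder X] [DecidableEq X]

def lowerEvals (x : X → A) (ℓ : X) (w : FreeMagma X) : Set A :=
  evalWord x '' {u | wlt u w ∧ countVar ℓ u = countVar ℓ w}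

lemma evalWord_mem_lowerEvals {x : X → A} {ℓ : X} {u w : FreeMagma X} (h : wlt u w)
    (hc : countVar ℓ u = countVar ℓ w) : evalWord x u ∈ lowerEvals x ℓ w :=
  ⟨u, ⟨h, hc⟩, rfl⟩

lemma mul_evalWord_mem_span_lowerEvals [SMulCommClass k A A] {x : X → A} {ℓ : X}
    {v : FreeMagma X} (hv : evalWord x v ∈ span k (lowerEvals x ℓ v)) (u : FreeMagma X) :
    evalWord x (u * v) ∈ span k (lowerEvals x ℓ (u * v)) := by
  refine span_mono ?_
    (apply_mem_span_image_of_mem_span (LinearMap.mulLeft k (evalWord x u)) hv)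
  rintro _ ⟨_, ⟨v', ⟨hlt, hc⟩, rfl⟩, rfl⟩
  exact ⟨u * v', ⟨wlt_mul_right hlt u, by simp [hc]⟩, rfl⟩

lemma evalWord_mul_mem_span_lowerEvals [IsScalarTower k A A] {x : X → A} {ℓ : X}
    {u : FreeMagma X} (hu : evalWord x u ∈ span k (lowerEvals x ℓ u)) (v : FreeMagma X) :
    evalWord x (u * v) ∈ span k (lowerEvals x ℓ (u * v)) := by
  refine span_mono ?_
    (apply_mem_span_image_of_mem_span (LinearMap.mulRight k (evalWord x v)) hu)
  rintro _ ⟨_, ⟨u', ⟨hlt, hc⟩, rfl⟩, rfl⟩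
  exact ⟨u' * v, ⟨wlt_mul_left hlt v, by simp [hc]⟩, rfl⟩

lemma evalWord_mem_span_lowerEvals_of_not_isGood [SMulCommClass k A A] [IsScalarTower k A A]
    (hA : IsRightSymmetric A) (x : X → A) (ℓ : X) :
    ∀ {w : FreeMagma X}, ¬IsGood w → evalWord x w ∈ span k (lowerEvals x ℓ w)
  | .of _, hw => (hw trivial).elim
  | .mul u v, hw => by
    rw [FreeMagma.mul_eq]
    by_cases hu : IsGood u
    · by_cases hv : IsGood v
      · cases u using FreeMagma.recOnMul with
        | ih1 a => exact (hw hv).elim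
        | ih2 u₁ u₂ =>
          -- both factors are good, so the defect is at the root: `(u₁u₂)v` with `v < u₂`
          have hvu : wlt v u₂ := by_contra fun h => hw ⟨hu, hv, h⟩
          have hu₁ : wlt u₁ (u₁ * u₂) := wlt_of_deg_lt (by simp [deg_pos u₂])
          rw [hA.evalWord_mul_mul]
          refine sub_mem (add_mem ?_ ?_) ?_ <;>
            refine subset_span
              (evalWord_mem_lowerEvals (wlt_mul_of_wlt_left (by simp; omega) ?_) (by simp; omega))
          exacts [hu₁, wlt_mul_right hvu u₁, hu₁]
      · exact mul_evalWord_mem_span_lowerEvals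
          (evalWord_mem_span_lowerEvals_of_not_isGood hA x ℓ hv) u
    · exact evalWord_mul_mem_span_lowerEvals
        (evalWord_mem_span_lowerEvals_of_not_isGood hA x ℓ hu) v

theorem evalWord_mem_span_isGood [WellFoundedLT X] [SMulCommClass k A A] [IsScalarTower k A A]
    (hA : IsRightSymmetric A) (x : X → A) (ℓ : X) (w : FreeMagma X) :
    evalWord x w ∈ span k (evalWord x '' {u | IsGood u ∧ countVar ℓ u = countVar ℓ w}) := by
  induction w using (wellFounded_wlt (X := X)).induction with | h w ih
  by_cases hw : IsGood w
  · exact subset_span ⟨w, ⟨hw, rfl⟩, rfl⟩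
  · refine span_le.2 ?_ (evalWord_mem_span_lowerEvals_of_not_isGood hA x ℓ hw)
    rintro _ ⟨u, ⟨hlt, hc⟩, rfl⟩
    simpa only [hc, SetLike.mem_coe] using ih u hlt

end Reduction

theorem apply_mem_span_of_span_eq_top {R M N : Type*} [CommSemiring R] [AddCommMonoid M]
    [AddCommMonoid N] [Module R M] [Module R N] (f : M →ₗ[R] N →ₗ[R] N) {G : Set M}
    {S : Set N} (hG : span R G = ⊤) (h : ∀ g ∈ G, ∀ s ∈ S, f g s ∈ span R S) (m : M)
    {n : N} (hn : n ∈ span R S) : f m n ∈ span R S := by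
  have hle : map₂ f (span R G) (span R S) ≤ span R S := by
    rw [map₂_span_span, span_le]
    rintro _ ⟨g, hg, s, hs, rfl⟩
    exact h g hg s hs
  exact hle (apply_mem_map₂ f (hG ▸ mem_top) hn)

section Ideal

variable {k A : Type*} [Field k] [NonUnitalNonAssocRing A] [Module k A]

lemma mem_idealGen_self (f : A) : f ∈ idealGen k f :=
  mem_sInf.2 fun _ hI => hI.1

lemma mul_mem_idealGen {f : A} (a : A) {y : A} (hy : y ∈ idealGen k f) :
    a * y ∈ idealGen k f ∧ y * a ∈ idealGen k f :=
  ⟨mem_sInf.2 fun I hI => (hI.2 a y (mem_sInf.1 hy I hI)).1,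
    mem_sInf.2 fun I hI => (hI.2 a y (mem_sInf.1 hy I hI)).2⟩

lemma idealGen_le {f : A} {I : Submodule k A} (hf : f ∈ I)
    (hI : ∀ a : A, ∀ y ∈ I, a * y ∈ I ∧ y * a ∈ I) : idealGen k f ≤ I :=
  sInf_le ⟨hf, hI⟩

lemma evalWord_mem_idealGen {X : Type*} [DecidableEq X] (x : X → A) (ℓ : X) :
    ∀ {w : FreeMagma X}, 0 < countVar ℓ w → evalWord x w ∈ idealGen k (x ℓ)
  | .of a, hw => by
    obtain rfl : a = ℓ := by by_contra h; simp [countVar, h] at hw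
    exact mem_idealGen_self _
  | .mul u v, hw => by
    rw [FreeMagma.mul_eq, evalWord_mul]
    rcases Nat.eq_zero_or_pos (countVar ℓ u) with hu | hu
    · exact (mul_mem_idealGen _ (evalWord_mem_idealGen x ℓ (by simpa [hu] using hw))).1
    · exact (mul_mem_idealGen _ (evalWord_mem_idealGen x ℓ hu)).2

end Ideal

theorem span_evalWord_isGood_eq_idealGen {k A X : Type*} [Field k] [NonUnitalNonAssocRing A]
    [Module k A] [SMulCommClass k A A] [IsScalarTower k A A] [LinearOrder X] [WellFoundedLT X]
    [DecidableEq X] (hA : IsRightSymmetric A) (x : X → A) (ℓ : X)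
    (hx : span k (evalWord x '' {u | countVar ℓ u = 0}) = ⊤) :
    span k (evalWord x '' {w | IsGood w ∧ countVar ℓ w = 1}) = idealGen k (x ℓ) := by
  set W := evalWord x '' {w | countVar ℓ w = 1}
  have hgood : span k (evalWord x '' {w | IsGood w ∧ countVar ℓ w = 1}) = span k W := by
    refine le_antisymm (span_mono (Set.image_mono fun w hw => hw.2)) (span_le.2 ?_)
    rintro _ ⟨w, hw : countVar ℓ w = 1, rfl⟩
    simpa only [hw, SetLike.mem_coe] using evalWord_mem_span_isGood (k := k) hA x ℓ w
  have hclosed : ∀ u ∈ evalWord x '' {u | countVar ℓ u = 0}, ∀ w ∈ W,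
      u * w ∈ span k W ∧ w * u ∈ span k W := by
    rintro _ ⟨u, hu, rfl⟩ _ ⟨w, hw, rfl⟩
    exact ⟨subset_span ⟨u * w, by simp_all, rfl⟩, subset_span ⟨w * u, by simp_all, rfl⟩⟩
  rw [hgood]
  refine le_antisymm (span_le.2 ?_)
    (idealGen_le (subset_span ⟨.of ℓ, by simp [countVar], rfl⟩) fun a y hy => ⟨?_, ?_⟩)
  · rintro _ ⟨w, hw, rfl⟩
    exact evalWord_mem_idealGen x ℓ (by simp_all)
  · exact apply_mem_span_of_span_eq_top (LinearMap.mul k A) hx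
      (fun u hu w hw => (hclosed u hu w hw).1) a hy
  · exact apply_mem_span_of_span_eq_top (LinearMap.mul k A).flip hx
      (fun u hu w hw => (hclosed u hu w hw).2) a hy

theorem statement9_general (k : Type*) [Field k] (n : ℕ) (A B : Type*)
    [NonUnitalNonAssocRing A] [Module k A] [SMulCommClass k A A] [IsScalarTower k A A]
    [NonUnitalNonAssocRing B] [Module k B] [SMulCommClass k B B] [IsScalarTower k B B]
    (DA : FreeRSData k n A) (DB : FreeRSData k (n + 1) B)
    (f : A)
    (π : B →ₙₐ[k] A)
    (hπx : ∀ i : Fin n, π (DB.x i.castSucc) = DA.x i)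
    (hπy : π (DB.x (Fin.last n)) = f) :
    Submodule.span k {a : A | ∃ w : FreeMagma (Fin (n + 1)),
        IsGood w ∧ countVar (Fin.last n) w = 1 ∧ a = π (evalWord DB.x w)} =
      idealGen k f := by
  have hset : {a : A | ∃ w : FreeMagma (Fin (n + 1)),
      IsGood w ∧ countVar (Fin.last n) w = 1 ∧ a = π (evalWord DB.x w)} =
        evalWord (π ∘ DB.x) '' {w | IsGood w ∧ countVar (Fin.last n) w = 1} := by
    ext a
    simp [map_evalWord, eq_comm, and_assoc]
  rw [hset, ← hπy]
  refine span_evalWord_isGood_eq_idealGen DA.rightSymm _ _ (eq_top_iff.2 ?_)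
  rw [← DA.basis.span_eq, span_le]
  rintro _ ⟨u, rfl⟩
  refine subset_span ⟨FreeMagma.map Fin.castSucc u.1, countVar_map_eq_zero (by simp) _, ?_⟩
  rw [DA.basis_eq, evalWord_map]
  exact congrArg (evalWord · u.1) (funext hπx)

/-- Lemma 3.1: let `f ≠ 0` in `A = RS⟨x_1,…,x_n⟩`, let
`B = RS⟨x_1,…,x_n,y⟩` with `y > x_n` (the alphabet is `Fin (n+1)` with `y = Fin.last n`),
let `π : B → A` be the homomorphism with `π(x_i) = x_i`, `π(y) = f`, and let `W_y` be the
set of good words of `y`-degree `1`. Then the `k`-linear span of `π(W_y)` is the two-sided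
ideal `(f)` of `A`. -/
theorem statement9 (k : Type*) [Field k] (n : ℕ) (A B : Type*)
    [NonUnitalNonAssocRing A] [Module k A] [SMulCommClass k A A] [IsScalarTower k A A]
    [NonUnitalNonAssocRing B] [Module k B] [SMulCommClass k B B] [IsScalarTower k B B]
    (DA : FreeRSData k n A) (DB : FreeRSData k (n + 1) B)
    (f : A) (hf : f ≠ 0)
    (π : B →ₙₐ[k] A)
    (hπx : ∀ i : Fin n, π (DB.x i.castSucc) = DA.x i)
    (hπy : π (DB.x (Fin.last n)) = f) :
    Submodule.span k {a : A | ∃ w : FreeMagma (Fin (n + 1)),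
        IsGood w ∧ countVar (Fin.last n) w = 1 ∧ a = π (evalWord DB.x w)} =
      idealGen k f :=
  statement9_general k n A B DA DB f π hπx hπy

end RS
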